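/- arXiv:2010.12938 — 5 statements merged into one kernel-verified Lean document; each statement's English description precedes it below -/
import Mathlib

section
/- Suppose (Q^v, W^v, t^v) is a maximizer of R(Q,t) over S_{Z,t}(Q', W') for some PSD Hermitian pair (Q', W'). Then the true secrecy rate at the new iterate dominates its approximate value: Cs(Q^v, W^v) ≥ R(Q^v, t^v). -/
open Matrix Finset ComplexOrder

namespace SRM

/-- `log det` of a complex matrix: real logarithm of the real part of the determinant. -/
noncomputable def phik {m n : ℕ} (H P : Matrix (Fin m) (Fin n) ℂ)
    (Q W : Matrix (Fin n) (Fin n) ℂ) : ℝ :=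
  Real.log ((1 + H * Q * Hᴴ + P * W * Pᴴ).det.re)

noncomputable def phiHat {m n : ℕ} (P : Matrix (Fin m) (Fin n) ℂ)
    (W : Matrix (Fin n) (Fin n) ℂ) : ℝ :=
  Real.log ((1 + P * W * Pᴴ).det.re)

/-- The `k`-th eavesdropper rate `C_k(Q,W)`. -/
noncomputable def Ceav {m n : ℕ} (H P : Matrix (Fin m) (Fin n) ℂ)
    (Q W : Matrix (Fin n) (Fin n) ℂ) : ℝ :=
  phik H P Q W - phiHat P W

/-- The legitimate (Alice-Bob) rate `C_0(Q)`. -/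
noncomputable def C0 {m n : ℕ} (H0 : Matrix (Fin m) (Fin n) ℂ)
    (Q : Matrix (Fin n) (Fin n) ℂ) : ℝ :=
  Real.log ((1 + H0 * Q * H0ᴴ).det.re)

/-- Gradient matrix `T_k(Q',W')`. -/
noncomputable def Tmat {m n : ℕ} (H P : Matrix (Fin m) (Fin n) ℂ)
    (Q' W' : Matrix (Fin n) (Fin n) ℂ) : Matrix (Fin n) (Fin n) ℂ :=
  Hᴴ * (1 + H * Q' * Hᴴ + P * W' * Pᴴ)⁻¹ * H

/-- Gradient matrix `R_k(Q',W')`. -/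
noncomputable def Rmat {m n : ℕ} (H P : Matrix (Fin m) (Fin n) ℂ)
    (Q' W' : Matrix (Fin n) (Fin n) ℂ) : Matrix (Fin n) (Fin n) ℂ :=
  Pᴴ * (1 + H * Q' * Hᴴ + P * W' * Pᴴ)⁻¹ * P

/-- Gradient of `φ̂_k` with respect to `W`. -/
noncomputable def Dmat {m n : ℕ} (P : Matrix (Fin m) (Fin n) ℂ)
    (W : Matrix (Fin n) (Fin n) ℂ) : Matrix (Fin n) (Fin n) ℂ :=
  Pᴴ * (1 + P * W * Pᴴ)⁻¹ * P

/-- Gradient of `C_0` with respect to `Q`. -/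
noncomputable def D0mat {m n : ℕ} (H0 : Matrix (Fin m) (Fin n) ℂ)
    (Q : Matrix (Fin n) (Fin n) ℂ) : Matrix (Fin n) (Fin n) ℂ :=
  H0ᴴ * (1 + H0 * Q * H0ᴴ)⁻¹ * H0

/-- First-order (linear) approximation `φ̄_k(Q,W | Q',W')` of `φ_k` around `(Q',W')`. -/
noncomputable def phiBar {m n : ℕ} (H P : Matrix (Fin m) (Fin n) ℂ)
    (Q W Q' W' : Matrix (Fin n) (Fin n) ℂ) : ℝ :=
  phik H P Q' W' + ((Tmat H P Q' W' * (Q - Q')).trace).re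
    + ((Rmat H P Q' W' * (W - W')).trace).re

/-- Convexified eavesdropper rate `C_{lk}(Q,W | Q',W')`. -/
noncomputable def Clk {m n : ℕ} (H P : Matrix (Fin m) (Fin n) ℂ)
    (Q W Q' W' : Matrix (Fin n) (Fin n) ℂ) : ℝ :=
  phiBar H P Q W Q' W' - phiHat P W

/-- Secrecy rate `C_s(Q,W) = C_0(Q) - max_k C_k(Q,W)`. -/
noncomputable def Cs {m0 n : ℕ} {K : Type*} [Fintype K] [Nonempty K] {mk : K → ℕ}
    (H0 : Matrix (Fin m0) (Fin n) ℂ)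
    (Hm Pm : (k : K) → Matrix (Fin (mk k)) (Fin n) ℂ)
    (Q W : Matrix (Fin n) (Fin n) ℂ) : ℝ :=
  C0 H0 Q - Finset.univ.sup' Finset.univ_nonempty (fun k => Ceav (Hm k) (Pm k) Q W)

/-- The feasible set `S_Z`. -/
def SZ {mg n : ℕ} (G : Matrix (Fin mg) (Fin n) ℂ) (V : Matrix (Fin n) (Fin n) ℂ)
    (Pmax Γ : ℝ) : Set (Matrix (Fin n) (Fin n) ℂ × Matrix (Fin n) (Fin n) ℂ) :=
  {Z | Z.1.PosSemidef ∧ Z.2.PosSemidef ∧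
    ((G * Z.1 * Gᴴ + G * V * Z.2 * Vᴴ * Gᴴ).trace).re ≤ Γ ∧
    ((Z.1 + Z.2).trace).re ≤ Pmax}

/-- The approximate feasible set `S_{Z,t}(Q',W')`. -/
def SZt {mg n : ℕ} {K : Type*} [Fintype K] {mk : K → ℕ}
    (G : Matrix (Fin mg) (Fin n) ℂ) (V : Matrix (Fin n) (Fin n) ℂ) (Pmax Γ : ℝ)
    (Hm Pm : (k : K) → Matrix (Fin (mk k)) (Fin n) ℂ)
    (Q' W' : Matrix (Fin n) (Fin n) ℂ) :
    Set ((Matrix (Fin n) (Fin n) ℂ × Matrix (Fin n) (Fin n) ℂ) × ℝ) :=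
  {x | x.1 ∈ SZ G V Pmax Γ ∧ ∀ k : K, Clk (Hm k) (Pm k) x.1.1 x.1.2 Q' W' ≤ x.2}

/-- The objective `R(Q,t) = C_0(Q) - t`. -/
noncomputable def Robj {m0 n : ℕ} (H0 : Matrix (Fin m0) (Fin n) ℂ)
    (Q : Matrix (Fin n) (Fin n) ℂ) (t : ℝ) : ℝ :=
  C0 H0 Q - t

end SRM

/-!
The linearization `φ̄_k` of `φ_k` at `(Q', W')` is a global upper bound for `φ_k`, because
`φ_k` is `log det` of an affine function of `(Q, W)` and `log det` is concave on positive definite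
matrices. Hence every feasible `(Q, W, t)` satisfies `C_k(Q, W) ≤ C_lk(Q, W | Q', W') ≤ t`, so
`max_k C_k ≤ t`. Concavity of `log det` at `A` reduces, after conjugating by `A^{-1/2}`, to
`log x ≤ x - 1` applied to the eigenvalues.
-/

lemma Complex.log_re_mul_of_pos {z w : ℂ} (hz : 0 < z) (hw : 0 < w) :
    Real.log (z * w).re = Real.log z.re + Real.log w.re := by
  obtain ⟨hz_re, hz_im⟩ := Complex.pos_iff.mp hz
  obtain ⟨hw_re, -⟩ := Complex.pos_iff.mp hw
  rw [Complex.mul_re, ← hz_im, zero_mul, sub_zero, Real.log_mul hz_re.ne' hw_re.ne']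

namespace Matrix

variable {ι : Type*} [Fintype ι] [DecidableEq ι]

lemma PosDef.log_det_re_le_trace_re_sub_card {M : Matrix ι ι ℂ} (hM : M.PosDef) :
    Real.log M.det.re ≤ M.trace.re - Fintype.card ι := by
  have hH := hM.isHermitian
  have hdet : M.det.re = ∏ i, hH.eigenvalues i := by
    rw [hH.det_eq_prod_eigenvalues]
    exact_mod_cast Complex.ofReal_re _
  have htr : M.trace.re = ∑ i, hH.eigenvalues i := by
    rw [hH.trace_eq_sum_eigenvalues]
    exact_mod_cast Complex.ofReal_re _
  rw [hdet, htr, Real.log_prod fun i _ => (hM.eigenvalues_pos i).ne']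
  calc ∑ i, Real.log (hH.eigenvalues i) ≤ ∑ i, (hH.eigenvalues i - 1) :=
        sum_le_sum fun i _ => Real.log_le_sub_one_of_pos (hM.eigenvalues_pos i)
    _ = ∑ i, hH.eigenvalues i - Fintype.card ι := by simp [sum_sub_distrib]

open scoped MatrixOrder in
lemma PosDef.log_det_re_le_add_trace {A B : Matrix ι ι ℂ} (hA : A.PosDef) (hB : B.PosDef) :
    Real.log B.det.re ≤ Real.log A.det.re + (A⁻¹ * (B - A)).trace.re := by
  have hA_unit : IsUnit A.det := hA.det_pos.ne'.isUnit
  set R := CFC.sqrt A⁻¹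
  have hRR : R * R = A⁻¹ := CFC.sqrt_mul_sqrt_self _ hA.inv.posSemidef.nonneg
  have hRH : Rᴴ = R := (CFC.sqrt_nonneg A⁻¹).posSemidef.isHermitian.eq
  have hRdet : R.det * (R.det * A.det) = 1 := by
    rw [← det_mul, ← det_mul, ← mul_assoc, hRR, nonsing_inv_mul A hA_unit, det_one]
  have hR_unit : IsUnit R := (isUnit_iff_isUnit_det R).mpr (IsUnit.of_mul_eq_one _ hRdet)
  have hN : (R * B * R).PosDef := by
    simpa only [hRH] using hB.mul_mul_conjTranspose_same (vecMul_injective_of_isUnit hR_unit)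
  have hdet : (R * B * R).det * A.det = B.det := by
    rw [det_mul, det_mul]
    linear_combination B.det * hRdet
  have htr : (A⁻¹ * (B - A)).trace.re = (R * B * R).trace.re - Fintype.card ι := by
    rw [trace_mul_cycle, hRR, mul_sub, nonsing_inv_mul A hA_unit, trace_sub, trace_one]
    simp
  have hlog : Real.log B.det.re = Real.log (R * B * R).det.re + Real.log A.det.re := by
    rw [← hdet, Complex.log_re_mul_of_pos hN.det_pos hA.det_pos]
  linarith [hN.log_det_re_le_trace_re_sub_card]

end Matrix

namespace SRM

variable {m n : ℕ}

lemma posDef_one_add_add (H P : Matrix (Fin m) (Fin n) ℂ) {Q W : Matrix (Fin n) (Fin n) ℂ}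
    (hQ : Q.PosSemidef) (hW : W.PosSemidef) : (1 + H * Q * Hᴴ + P * W * Pᴴ).PosDef :=
  (PosDef.one.add_posSemidef (hQ.mul_mul_conjTranspose_same H)).add_posSemidef
    (hW.mul_mul_conjTranspose_same P)

lemma phik_le_phiBar (H P : Matrix (Fin m) (Fin n) ℂ) {Q W Q' W' : Matrix (Fin n) (Fin n) ℂ}
    (hQ : Q.PosSemidef) (hW : W.PosSemidef) (hQ' : Q'.PosSemidef) (hW' : W'.PosSemidef) :
    phik H P Q W ≤ phiBar H P Q W Q' W' := by
  set A := 1 + H * Q' * Hᴴ + P * W' * Pᴴ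
  set B := 1 + H * Q * Hᴴ + P * W * Pᴴ
  have hdiff : B - A = H * (Q - Q') * Hᴴ + P * (W - W') * Pᴴ := by
    simp only [A, B, Matrix.mul_sub, Matrix.sub_mul]
    abel
  have cycle (X : Matrix (Fin m) (Fin n) ℂ) (D : Matrix (Fin n) (Fin n) ℂ) :
      (Xᴴ * A⁻¹ * X * D).trace = (A⁻¹ * (X * D * Xᴴ)).trace := by
    rw [Matrix.mul_assoc, Matrix.mul_assoc, trace_mul_comm]
    simp only [Matrix.mul_assoc]
  have key : Real.log B.det.re ≤ Real.log A.det.re + (A⁻¹ * (B - A)).trace.re :=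
    (posDef_one_add_add H P hQ' hW').log_det_re_le_add_trace (posDef_one_add_add H P hQ hW)
  rw [hdiff, Matrix.mul_add, trace_add, Complex.add_re] at key
  unfold phiBar phik Tmat Rmat
  rw [cycle, cycle]
  linarith

lemma Ceav_le_Clk (H P : Matrix (Fin m) (Fin n) ℂ) {Q W Q' W' : Matrix (Fin n) (Fin n) ℂ}
    (hQ : Q.PosSemidef) (hW : W.PosSemidef) (hQ' : Q'.PosSemidef) (hW' : W'.PosSemidef) :
    Ceav H P Q W ≤ Clk H P Q W Q' W' :=
  sub_le_sub_right (phik_le_phiBar H P hQ hW hQ' hW') _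

theorem Robj_le_Cs_at_max_general {n mg m0 : ℕ} {K : Type*} [Fintype K] [Nonempty K] {mk : K → ℕ}
    (H0 : Matrix (Fin m0) (Fin n) ℂ)
    (G : Matrix (Fin mg) (Fin n) ℂ) (V : Matrix (Fin n) (Fin n) ℂ)
    (Pmax Γ : ℝ)
    (Hm Pm : (k : K) → Matrix (Fin (mk k)) (Fin n) ℂ)
    (Q' W' : Matrix (Fin n) (Fin n) ℂ) (hQ' : Q'.PosSemidef) (hW' : W'.PosSemidef)
    (Qv Wv : Matrix (Fin n) (Fin n) ℂ) (tv : ℝ)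
    (hmem : ((Qv, Wv), tv) ∈ SZt G V Pmax Γ Hm Pm Q' W') :
    Robj H0 Qv tv ≤ Cs H0 Hm Pm Qv Wv := by
  obtain ⟨⟨hQv, hWv, -, -⟩, hClk⟩ := hmem
  have hmax_le : univ.sup' univ_nonempty (fun k => Ceav (Hm k) (Pm k) Qv Wv) ≤ tv :=
    sup'_le _ _ fun k _ => (Ceav_le_Clk (Hm k) (Pm k) hQv hWv hQ' hW').trans (hClk k)
  unfold Robj Cs
  linarith

/-- at a maximizer of `R(Q,t)` over `S_{Z,t}(Q',W')`, the true secrecy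
rate dominates the approximate value: `C_s(Q^v,W^v) ≥ R(Q^v,t^v)`. -/
theorem Robj_le_Cs_at_max {n mg m0 : ℕ} {K : Type*} [Fintype K] [Nonempty K] {mk : K → ℕ} (hn : 0 < n)
    (H0 : Matrix (Fin m0) (Fin n) ℂ)
    (G : Matrix (Fin mg) (Fin n) ℂ) (V : Matrix (Fin n) (Fin n) ℂ)
    (Pmax Γ : ℝ) (hPmax : 0 ≤ Pmax) (hΓ : 0 ≤ Γ)
    (Hm Pm : (k : K) → Matrix (Fin (mk k)) (Fin n) ℂ)
    (Q' W' : Matrix (Fin n) (Fin n) ℂ) (hQ' : Q'.PosSemidef) (hW' : W'.PosSemidef)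
    (Qv Wv : Matrix (Fin n) (Fin n) ℂ) (tv : ℝ)
    (hmem : ((Qv, Wv), tv) ∈ SZt G V Pmax Γ Hm Pm Q' W')
    (hmax : ∀ x ∈ SZt G V Pmax Γ Hm Pm Q' W', Robj H0 x.1.1 x.2 ≤ Robj H0 Qv tv) :
    Robj H0 Qv tv ≤ Cs H0 Hm Pm Qv Wv :=
  Robj_le_Cs_at_max_general H0 G V Pmax Γ Hm Pm Q' W' hQ' hW' Qv Wv tv hmem

end SRM
end

section
/- Suppose (Q', W') ∈ S_Z and (Q^v, W^v, t^v) is a maximizer of R(Q,t) over S_{Z,t}(Q', W'). Then the approximate value at the new iterate dominates the true secrecy rate at the previous iterate: R(Q^v, t^v) ≥ Cs(Q', W'). -/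
open Matrix Finset ComplexOrder

namespace SRM

/-- if `(Q',W') ∈ S_Z` and `(Q^v,W^v,t^v)` maximizes `R(Q,t)` over
`S_{Z,t}(Q',W')`, then `R(Q^v,t^v) ≥ C_s(Q',W')`. -/
theorem Cs_prev_le_Robj_at_max {n mg m0 : ℕ} {K : Type*} [Fintype K] [Nonempty K]
    {mk : K → ℕ} (hn : 0 < n)
    (H0 : Matrix (Fin m0) (Fin n) ℂ)
    (G : Matrix (Fin mg) (Fin n) ℂ) (V : Matrix (Fin n) (Fin n) ℂ)
    (Pmax Γ : ℝ) (hPmax : 0 ≤ Pmax) (hΓ : 0 ≤ Γ)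
    (Hm Pm : (k : K) → Matrix (Fin (mk k)) (Fin n) ℂ)
    (Q' W' : Matrix (Fin n) (Fin n) ℂ) (hprev : (Q', W') ∈ SZ G V Pmax Γ)
    (Qv Wv : Matrix (Fin n) (Fin n) ℂ) (tv : ℝ)
    (hmem : ((Qv, Wv), tv) ∈ SZt G V Pmax Γ Hm Pm Q' W')
    (hmax : ∀ x ∈ SZt G V Pmax Γ Hm Pm Q' W', Robj H0 x.1.1 x.2 ≤ Robj H0 Qv tv) :
    Cs H0 Hm Pm Q' W' ≤ Robj H0 Qv tv := by
  have key : ∀ k : K, Clk (Hm k) (Pm k) Q' W' Q' W' = Ceav (Hm k) (Pm k) Q' W' := by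
    intro k
    simp [Clk, phiBar, Ceav, sub_self, Matrix.mul_zero, Matrix.trace_zero]
  have hmem' : ((Q', W'), Finset.univ.sup' Finset.univ_nonempty
      (fun k : K => Ceav (Hm k) (Pm k) Q' W')) ∈ SZt G V Pmax Γ Hm Pm Q' W' := by
    refine ⟨hprev, fun k => ?_⟩
    rw [key k]
    exact Finset.le_sup' (fun k : K => Ceav (Hm k) (Pm k) Q' W') (Finset.mem_univ k)
  have := hmax _ hmem'
  simpa [Cs, Robj] using this

end SRM
end

section
/- Termination of Algorithm 1 (Proposition 2(ii)): under the same SCA iteration hypotheses as Proposition 2(i) — (Q^0, W^0) ∈ S_Z, Cs bounded above on S_Z, and for every v ≥ 1, (Q^v, W^v, t^v) a maximizer of R(Q,t) over S_{Z,t}(Q^{v−1}, W^{v−1}) — for every ε > 0 and every integer v0 ≥ 1 there exists V ≥ v0 such that for all v ≥ V: Cs(Q^v, W^v) − Cs(Q^{v−v0}, W^{v−v0}) ≤ ε. In particular, the stopping criterion Cs(Q^v,W^v) − Cs(Q^{v−v0},W^{v−v0}) ≤ ε is eventually satisfied. -/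
open Matrix Finset ComplexOrder

/-! Each SCA step can only increase the secrecy rate: the previous iterate, paired with its true
eavesdropper rate, is feasible for the convexified problem (the linearization is exact at the
expansion point), while concavity of `log det` makes the linearized eavesdropper rate an upper
bound on the true one. The secrecy rates of the iterates thus form a nondecreasing sequence,
bounded above by hypothesis, hence convergent, so their increments over `v0` steps eventually
drop below `ε`. -/

namespace Matrix

variable {𝕜 : Type*} [RCLike 𝕜] {n : Type*} [Fintype n] [DecidableEq n]

lemma PosDef.log_re_det_le_re_trace_sub_card {C : Matrix n n 𝕜} (hC : C.PosDef) :
    Real.log (RCLike.re C.det) ≤ RCLike.re C.trace - Fintype.card n := by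
  have hev := hC.eigenvalues_pos
  rw [hC.isHermitian.det_eq_prod_eigenvalues, hC.isHermitian.trace_eq_sum_eigenvalues,
    ← RCLike.ofReal_prod, ← RCLike.ofReal_sum, RCLike.ofReal_re, RCLike.ofReal_re,
    Real.log_prod fun i _ => (hev i).ne']
  calc _ ≤ ∑ i, (_ - 1) := Finset.sum_le_sum fun i _ => Real.log_le_sub_one_of_pos (hev i)
    _ = _ := by simp [Finset.sum_sub_distrib]

open scoped MatrixOrder in
lemma PosDef.log_re_det_le_add_re_trace {A B : Matrix n n 𝕜} (hA : A.PosDef) (hB : B.PosDef) :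
    Real.log (RCLike.re B.det) ≤
      Real.log (RCLike.re A.det) + RCLike.re (A⁻¹ * (B - A)).trace := by
  set S := CFC.sqrt A⁻¹
  have hSS : S * S = A⁻¹ := CFC.sqrt_mul_sqrt_self A⁻¹ hA.inv.posSemidef.nonneg
  have hSstar : star S = S := (CFC.sqrt_nonneg A⁻¹).posSemidef.isHermitian
  have hSunit : IsUnit S :=
    isUnit_of_mul_isUnit_left (hSS ▸ isUnit_nonsing_inv_iff.mpr hA.isUnit)
  have hC : (star S * B * S).PosDef := (IsUnit.posDef_star_left_conjugate_iff hSunit).mpr hB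
  obtain ⟨a, ha, hdetA⟩ := RCLike.pos_iff_exists_ofReal.mp hA.det_pos
  obtain ⟨b, hb, hdetB⟩ := RCLike.pos_iff_exists_ofReal.mp hB.det_pos
  have hdetC : (star S * B * S).det = ((a⁻¹ * b : ℝ) : 𝕜) := by
    rw [hSstar, det_mul, det_mul, mul_comm, ← mul_assoc, ← det_mul, hSS, det_nonsing_inv,
      ← hdetA, ← hdetB, Ring.inverse_eq_inv', RCLike.ofReal_mul, RCLike.ofReal_inv]
  have htrC : (star S * B * S).trace = (A⁻¹ * B).trace := by
    rw [hSstar, trace_mul_cycle, hSS]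
  have key := hC.log_re_det_le_re_trace_sub_card
  rw [hdetC, htrC, RCLike.ofReal_re, Real.log_mul (inv_pos.mpr ha).ne' hb.ne', Real.log_inv]
    at key
  rw [← hdetA, ← hdetB, RCLike.ofReal_re, RCLike.ofReal_re, mul_sub, trace_sub,
    nonsing_inv_mul A ((isUnit_iff_isUnit_det A).mp hA.isUnit), trace_one, map_sub,
    RCLike.natCast_re]
  linarith

lemma trace_mul_mul_mul_cycle {R l m : Type*} [CommSemiring R] [Fintype l] [Fintype m]
    (M : Matrix l l R) (H : Matrix l m R) (X : Matrix m m R) (B : Matrix m l R) :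
    (M * (H * X * B)).trace = (B * M * H * X).trace := by
  rw [← Matrix.mul_assoc, trace_mul_comm]
  simp only [Matrix.mul_assoc]

end Matrix

lemma Monotone.exists_forall_ge_sub_le {g : ℕ → ℝ} (hg : Monotone g)
    (hb : BddAbove (Set.range g)) {ε : ℝ} (hε : 0 < ε) (d : ℕ) :
    ∃ N, d ≤ N ∧ ∀ v, N ≤ v → g v - g (v - d) ≤ ε := by
  obtain ⟨N, hN⟩ : ∃ N, (⨆ v, g v) - ε < g N := exists_lt_of_lt_ciSup (sub_lt_self _ hε)
  refine ⟨N + d, Nat.le_add_left d N, fun v hv => ?_⟩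
  have := hg (show N ≤ v - d by omega)
  linarith [le_ciSup hb v]

namespace SRM

variable {m n : ℕ}

lemma Clk_self (H P : Matrix (Fin m) (Fin n) ℂ) (Q W : Matrix (Fin n) (Fin n) ℂ) :
    Clk H P Q W Q W = Ceav H P Q W := by
  simp [Clk, Ceav, phiBar]

section SCAStep

variable {mg m0 : ℕ} {K : Type*} [Fintype K] [Nonempty K] {mk : K → ℕ}
  {G : Matrix (Fin mg) (Fin n) ℂ} {V : Matrix (Fin n) (Fin n) ℂ} {Pmax Γ : ℝ}
  {H0 : Matrix (Fin m0) (Fin n) ℂ} {Hm Pm : (k : K) → Matrix (Fin (mk k)) (Fin n) ℂ}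

lemma mk_sup_Ceav_mem_SZt {Z : Matrix (Fin n) (Fin n) ℂ × Matrix (Fin n) (Fin n) ℂ}
    (hZ : Z ∈ SZ G V Pmax Γ) :
    (Z, univ.sup' univ_nonempty fun k => Ceav (Hm k) (Pm k) Z.1 Z.2) ∈
      SZt G V Pmax Γ Hm Pm Z.1 Z.2 :=
  ⟨hZ, fun k => (Clk_self (Hm k) (Pm k) Z.1 Z.2).trans_le
    (le_sup' (fun k => Ceav (Hm k) (Pm k) Z.1 Z.2) (mem_univ k))⟩

lemma sup_Ceav_le_of_mem_SZt {Q' W' : Matrix (Fin n) (Fin n) ℂ}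
    (hQ' : Q'.PosSemidef) (hW' : W'.PosSemidef) {x} (hx : x ∈ SZt G V Pmax Γ Hm Pm Q' W') :
    univ.sup' univ_nonempty (fun k => Ceav (Hm k) (Pm k) x.1.1 x.1.2) ≤ x.2 :=
  sup'_le _ _ fun k _ => (Ceav_le_Clk (Hm k) (Pm k) hx.1.1 hx.1.2.1 hQ' hW').trans (hx.2 k)

lemma Cs_le_of_isMax_Robj {Z : Matrix (Fin n) (Fin n) ℂ × Matrix (Fin n) (Fin n) ℂ}
    (hZ : Z ∈ SZ G V Pmax Γ) {y} (hy : y ∈ SZt G V Pmax Γ Hm Pm Z.1 Z.2)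
    (hmax : ∀ x ∈ SZt G V Pmax Γ Hm Pm Z.1 Z.2, Robj H0 x.1.1 x.2 ≤ Robj H0 y.1.1 y.2) :
    Cs H0 Hm Pm Z.1 Z.2 ≤ Cs H0 Hm Pm y.1.1 y.1.2 := by
  have hZ_opt := hmax _ (mk_sup_Ceav_mem_SZt hZ)
  have hy_sup := sup_Ceav_le_of_mem_SZt hZ.1 hZ.2.1 hy
  rw [Robj, Robj] at hZ_opt
  rw [Cs, Cs]
  linarith

end SCAStep

theorem sca_stopping_criterion_general {n mg m0 : ℕ} {K : Type*} [Fintype K] [Nonempty K]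
    {mk : K → ℕ}
    (H0 : Matrix (Fin m0) (Fin n) ℂ)
    (G : Matrix (Fin mg) (Fin n) ℂ) (V : Matrix (Fin n) (Fin n) ℂ)
    (Pmax Γ : ℝ)
    (Hm Pm : (k : K) → Matrix (Fin (mk k)) (Fin n) ℂ)
    (Qs Ws : ℕ → Matrix (Fin n) (Fin n) ℂ) (ts : ℕ → ℝ)
    (h0 : (Qs 0, Ws 0) ∈ SZ G V Pmax Γ)
    (hbdd : BddAbove ((fun Z => Cs H0 Hm Pm Z.1 Z.2) '' SZ G V Pmax Γ))
    (hiter : ∀ v : ℕ, 1 ≤ v →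
      ((Qs v, Ws v), ts v) ∈ SZt G V Pmax Γ Hm Pm (Qs (v - 1)) (Ws (v - 1)) ∧
      ∀ x ∈ SZt G V Pmax Γ Hm Pm (Qs (v - 1)) (Ws (v - 1)),
        Robj H0 x.1.1 x.2 ≤ Robj H0 (Qs v) (ts v))
    (ε : ℝ) (hε : 0 < ε) (v0 : ℕ) :
    ∃ V0 : ℕ, v0 ≤ V0 ∧ ∀ v : ℕ, V0 ≤ v →
      Cs H0 Hm Pm (Qs v) (Ws v) - Cs H0 Hm Pm (Qs (v - v0)) (Ws (v - v0)) ≤ ε := by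
  have hmem : ∀ v, (Qs v, Ws v) ∈ SZ G V Pmax Γ
    | 0 => h0
    | v + 1 => (hiter (v + 1) v.succ_pos).1.1
  have hmono : Monotone fun v => Cs H0 Hm Pm (Qs v) (Ws v) :=
    monotone_nat_of_le_succ fun v =>
      Cs_le_of_isMax_Robj (y := ((Qs (v + 1), Ws (v + 1)), ts (v + 1))) (hmem v)
        (hiter (v + 1) v.succ_pos).1 (hiter (v + 1) v.succ_pos).2
  have hbdd' : BddAbove (Set.range fun v => Cs H0 Hm Pm (Qs v) (Ws v)) :=
    hbdd.mono (Set.range_subset_iff.mpr fun v => Set.mem_image_of_mem _ (hmem v))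
  exact hmono.exists_forall_ge_sub_le hbdd' hε v0

/-- Proposition 2(ii): under the SCA iteration, for every `ε > 0` and
every integer `v0 ≥ 1` the stopping criterion
`C_s(Q^v,W^v) - C_s(Q^{v-v0},W^{v-v0}) ≤ ε` is eventually satisfied. -/
theorem sca_stopping_criterion {n mg m0 : ℕ} {K : Type*} [Fintype K] [Nonempty K]
    {mk : K → ℕ} (hn : 0 < n)
    (H0 : Matrix (Fin m0) (Fin n) ℂ)
    (G : Matrix (Fin mg) (Fin n) ℂ) (V : Matrix (Fin n) (Fin n) ℂ)
    (Pmax Γ : ℝ) (hPmax : 0 ≤ Pmax) (hΓ : 0 ≤ Γ)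
    (Hm Pm : (k : K) → Matrix (Fin (mk k)) (Fin n) ℂ)
    (Qs Ws : ℕ → Matrix (Fin n) (Fin n) ℂ) (ts : ℕ → ℝ)
    (h0 : (Qs 0, Ws 0) ∈ SZ G V Pmax Γ)
    (hbdd : BddAbove ((fun Z => Cs H0 Hm Pm Z.1 Z.2) '' SZ G V Pmax Γ))
    (hiter : ∀ v : ℕ, 1 ≤ v →
      ((Qs v, Ws v), ts v) ∈ SZt G V Pmax Γ Hm Pm (Qs (v - 1)) (Ws (v - 1)) ∧
      ∀ x ∈ SZt G V Pmax Γ Hm Pm (Qs (v - 1)) (Ws (v - 1)),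
        Robj H0 x.1.1 x.2 ≤ Robj H0 (Qs v) (ts v))
    (ε : ℝ) (hε : 0 < ε) (v0 : ℕ) (hv0 : 1 ≤ v0) :
    ∃ V0 : ℕ, v0 ≤ V0 ∧ ∀ v : ℕ, V0 ≤ v →
      Cs H0 Hm Pm (Qs v) (Ws v) - Cs H0 Hm Pm (Qs (v - v0)) (Ws (v - v0)) ≤ ε :=
  sca_stopping_criterion_general H0 G V Pmax Γ Hm Pm Qs Ws ts h0 hbdd hiter ε hε v0

end SRM
end

section
/- Proposition 3 (KKT transfer at a convergence point): let (Q, W) be a PSD Hermitian pair and t ∈ ℝ, and suppose there exist reals μ1 ≥ 0, μ2 ≥ 0, nonnegative reals λk (k ∈ K), and PSD Hermitian matrices M, N satisfying the KKT system of problem (P3a) with expansion point (Q', W') = (Q, W) (the convergence point), namely: (i) −D0(Q) + μ1 GᴴG + μ2 I − M + Σ_{k∈K} λk Tk(Q,W) = 0; (ii) μ1 Vᴴ Gᴴ G V + μ2 I − N + Σ_{k∈K} λk (Rk(Q,W) − Dk(W)) = 0; (iii) Σ_{k∈K} λk = 1; (iv) μ1(Re tr(G Q Gᴴ + G V W Vᴴ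 Gᴴ) − Γ) = 0, μ2(Re tr(Q+W) − P) = 0, M Q = 0, N W = 0, and λk(Ck(Q,W) − t) = 0 for all k; (v) (Q,W) ∈ S_Z and Ck(Q,W) ≤ t for all k. Then, setting t2 = C0(Q) − t, the same (Q, W, t2) together with the same multipliers μ1, μ2, λk, M, N satisfy the KKT system of problem (P2a): (i') μ1 GᴴG + μ2 I − M + Σ_{k∈K} λk (Tk(Q,W) − D0(Q)) = 0; (ii') μ1 Vᴴ Gᴴ G V + μ2 I − N + Σ_{k∈K} λk (Rk(Q,W) − Dk(W)) = 0; (iii') Σ_{k∈K} λk = 1; (iv') μ1(Re tr(G Q Gᴴ + G V W Vᴴ Gᴴ) − Γ) = 0, μ2(Re tr(Q+W) − P) = 0, M Q = 0, N W = 0, and λk(t2 + Ck(Q,W) − C0(Q)) = 0 for all k; (v') (Q,W) ∈ S_Z and t2 ≤ C0(Q) − Ck(Q,W) for all k. -/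
open Matrix Finset ComplexOrder

namespace SRM

/-- Proposition 3: if `(Q,W,t)` together with multipliers
`μ1, μ2, λ_k, M, N` satisfies the KKT system of problem (P3a) at the convergence
point (expansion point `(Q',W') = (Q,W)`), then, with `t2 = C_0(Q) - t`, the same
point and multipliers satisfy the KKT system of problem (P2a). -/
theorem kkt_transfer {n mg m0 : ℕ} {K : Type*} [Fintype K] [Nonempty K] {mk : K → ℕ} (hn : 0 < n)
    (H0 : Matrix (Fin m0) (Fin n) ℂ)
    (G : Matrix (Fin mg) (Fin n) ℂ) (V : Matrix (Fin n) (Fin n) ℂ)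
    (Pmax Γ : ℝ) (hPmax : 0 ≤ Pmax) (hΓ : 0 ≤ Γ)
    (Hm Pm : (k : K) → Matrix (Fin (mk k)) (Fin n) ℂ)
    (Q W M N : Matrix (Fin n) (Fin n) ℂ) (t : ℝ)
    (hQ : Q.PosSemidef) (hW : W.PosSemidef) (hM : M.PosSemidef) (hN : N.PosSemidef)
    (μ1 μ2 : ℝ) (hμ1 : 0 ≤ μ1) (hμ2 : 0 ≤ μ2)
    (lam : K → ℝ) (hlam : ∀ k : K, 0 ≤ lam k)
    -- (i) stationarity in Q for (P3a):
    (kkt1 : -(D0mat H0 Q) + μ1 • (Gᴴ * G) + μ2 • (1 : Matrix (Fin n) (Fin n) ℂ) - M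
      + ∑ k : K, lam k • Tmat (Hm k) (Pm k) Q W = 0)
    -- (ii) stationarity in W for (P3a):
    (kkt2 : μ1 • (Vᴴ * Gᴴ * G * V) + μ2 • (1 : Matrix (Fin n) (Fin n) ℂ) - N
      + ∑ k : K, lam k • (Rmat (Hm k) (Pm k) Q W - Dmat (Pm k) W) = 0)
    -- (iii) stationarity in t:
    (kkt3 : ∑ k : K, lam k = 1)
    -- (iv) complementary slackness:
    (kkt4a : μ1 * (((G * Q * Gᴴ + G * V * W * Vᴴ * Gᴴ).trace).re - Γ) = 0)
    (kkt4b : μ2 * (((Q + W).trace).re - Pmax) = 0)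
    (kkt4c : M * Q = 0) (kkt4d : N * W = 0)
    (kkt4e : ∀ k : K, lam k * (Ceav (Hm k) (Pm k) Q W - t) = 0)
    -- (v) primal feasibility:
    (kkt5a : (Q, W) ∈ SZ G V Pmax Γ)
    (kkt5b : ∀ k : K, Ceav (Hm k) (Pm k) Q W ≤ t) :
    -- KKT system of (P2a) with t2 = C0(Q) - t:
    (μ1 • (Gᴴ * G) + μ2 • (1 : Matrix (Fin n) (Fin n) ℂ) - M
      + ∑ k : K, lam k • (Tmat (Hm k) (Pm k) Q W - D0mat H0 Q) = 0) ∧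
    (μ1 • (Vᴴ * Gᴴ * G * V) + μ2 • (1 : Matrix (Fin n) (Fin n) ℂ) - N
      + ∑ k : K, lam k • (Rmat (Hm k) (Pm k) Q W - Dmat (Pm k) W) = 0) ∧
    (∑ k : K, lam k = 1) ∧
    (μ1 * (((G * Q * Gᴴ + G * V * W * Vᴴ * Gᴴ).trace).re - Γ) = 0) ∧
    (μ2 * (((Q + W).trace).re - Pmax) = 0) ∧
    (M * Q = 0) ∧ (N * W = 0) ∧
    (∀ k : K, lam k * ((C0 H0 Q - t) + Ceav (Hm k) (Pm k) Q W - C0 H0 Q) = 0) ∧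
    (Q, W) ∈ SZ G V Pmax Γ ∧
    (∀ k : K, C0 H0 Q - t ≤ C0 H0 Q - Ceav (Hm k) (Pm k) Q W) := by
  refine ⟨?_, kkt2, kkt3, kkt4a, kkt4b, kkt4c, kkt4d, ?_, kkt5a, ?_⟩
  · have hsum : ∑ k : K, lam k • (Tmat (Hm k) (Pm k) Q W - D0mat H0 Q)
        = (∑ k : K, lam k • Tmat (Hm k) (Pm k) Q W) - D0mat H0 Q := by
      simp only [smul_sub, Finset.sum_sub_distrib]
      congr 1
      rw [← Finset.sum_smul, kkt3, one_smul]
    rw [hsum]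
    calc μ1 • (Gᴴ * G) + μ2 • (1 : Matrix (Fin n) (Fin n) ℂ) - M
          + ((∑ k : K, lam k • Tmat (Hm k) (Pm k) Q W) - D0mat H0 Q)
        = -(D0mat H0 Q) + μ1 • (Gᴴ * G) + μ2 • (1 : Matrix (Fin n) (Fin n) ℂ) - M
          + ∑ k : K, lam k • Tmat (Hm k) (Pm k) Q W := by abel
      _ = 0 := kkt1
  · intro k
    have := kkt4e k
    have h : (C0 H0 Q - t) + Ceav (Hm k) (Pm k) Q W - C0 H0 Q
        = Ceav (Hm k) (Pm k) Q W - t := by ring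
    rw [h]; exact this
  · intro k
    linarith [kkt5b k]

end SRM
end

section
/- Proposition 4 (global optimality under concavity): let (Q, W) be a PSD Hermitian pair and t ∈ ℝ satisfying the KKT system of problem (P3a) at the convergence point (expansion point equal to (Q,W)): there exist μ1 ≥ 0, μ2 ≥ 0, nonnegative λk (k ∈ K), and PSD Hermitian M, N with (i) −D0(Q) + μ1 GᴴG + μ2 I − M + Σ_{k∈K} λk Tk(Q,W) = 0; (ii) μ1 Vᴴ Gᴴ G V + μ2 I − N + Σ_{k∈K} λk (Rk(Q,W) − Dk(W)) = 0; (iii) Σ_{k∈K} λk = 1; (iv) μ1(Re tr(G Q Gᴴ + G V W Vᴴ Gᴴ) − Γ) = 0, μ2(Re tr(Q+W) − P) = 0, M Q = 0, N W = 0, λk(Ck(Q,W) − t) = 0 for all k; (v) (Q,W) ∈ S_Z and Ck(Q,W) ≤ t for all k. Assume additionally that for every k ∈ K the function (Q̂,Ŵ) ↦ C0(Q̂) − Ck(Q̂,Ŵ) is concave on the convex set of pairs of n×n PSD Hermitian matrices. Then (Q,W) is a global maximizer of the secrecy rate: Cs(Q,W) ≥ Cs(Q̂,Ŵ) for every (Q̂,Ŵ)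 ∈ S_Z. -/
open Matrix Finset ComplexOrder

/-!
Each `C₀ - Cₖ` is concave, so it lies below its tangent at `(Q, W)`; summing with the weights
`λₖ` bounds `F(Z) - F(Q, W)`, for `F = ∑ₖ λₖ (C₀ - Cₖ)`, by the directional derivative of `F`
at `(Q, W)` towards `Z = (Ẑ, Ŵ)`. The stationarity conditions (i), (ii) turn this derivative into
`μ₁ (g(Z) - g(Q, W)) + μ₂ (p(Z) - p(Q, W)) - tr M (Ẑ - Q) - tr N (Ŵ - W)`, with `g`, `p` the
two constraint functions of `S_Z`, and complementary slackness together with feasibility of `Z`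
makes it nonpositive. Finally `C_s ≤ F` everywhere because `λ` is a probability vector, while
`F(Q, W) = C₀(Q) - t ≤ C_s(Q, W)` by (iv) and (v).
-/

theorem ConcaveOn.sub_le_of_hasDerivAt_line {E : Type*} [AddCommGroup E] [Module ℝ E]
    {s : Set E} {f : E → ℝ} (hf : ConcaveOn ℝ s f) {x y : E} (hx : x ∈ s) (hy : y ∈ s) {d : ℝ}
    (hd : HasDerivAt (fun t : ℝ => f (x + t • (y - x))) d 0) : f y - f x ≤ d := by
  have hline : ConcaveOn ℝ (Set.Icc 0 1) (fun t : ℝ => f (x + t • (y - x))) := by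
    have := hf.comp_affineMap (AffineMap.lineMap x y)
    simp only [Function.comp_def, AffineMap.lineMap_apply_module', add_comm _ x] at this
    refine this.subset (fun t ht => ?_) (convex_Icc 0 1)
    simpa [AffineMap.lineMap_apply_module', add_comm] using hf.1.add_smul_sub_mem hx hy ht
  simpa [slope_def_field] using
    hline.slope_le_of_hasDerivAt (by simp) (by simp) zero_lt_one hd

open Polynomial in
theorem Matrix.hasDerivAt_det_one_add_smul {𝕜 ι : Type*} [NontriviallyNormedField 𝕜] [Fintype ι]
    [DecidableEq ι] (C : Matrix ι ι 𝕜) :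
    HasDerivAt (fun z : 𝕜 => (1 + z • C).det) C.trace 0 := by
  have key : (fun z : 𝕜 => (1 + z • C).det)
      = fun z => (det (1 + (X : 𝕜[X]) • C.map Polynomial.C)).eval z := by
    funext z
    rw [eval_det]
    congr 1
    ext i j
    simp [mul_comm]
  rw [key, ← derivative_det_one_add_X_smul]
  exact Polynomial.hasDerivAt _ 0

theorem Matrix.hasDerivAt_det_add_smul {𝕜 ι : Type*} [NontriviallyNormedField 𝕜] [Fintype ι]
    [DecidableEq ι] {A : Matrix ι ι 𝕜} (hA : IsUnit A.det) (B : Matrix ι ι 𝕜) :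
    HasDerivAt (fun z : 𝕜 => (A + z • B).det) (A.det * (A⁻¹ * B).trace) 0 := by
  have hfun : (fun z : 𝕜 => (A + z • B).det) = fun z => A.det * (1 + z • (A⁻¹ * B)).det := by
    funext z
    rw [← det_mul, mul_add, mul_one, Matrix.mul_smul, ← Matrix.mul_assoc, mul_nonsing_inv _ hA,
      Matrix.one_mul]
  rw [hfun]
  exact (hasDerivAt_det_one_add_smul _).const_mul A.det

theorem Matrix.PosDef.hasDerivAt_log_det_re_add_smul {ι : Type*} [Fintype ι] [DecidableEq ι]
    {A : Matrix ι ι ℂ} (hA : A.PosDef) (B : Matrix ι ι ℂ) :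
    HasDerivAt (fun s : ℝ => Real.log (A + s • B).det.re) (A⁻¹ * B).trace.re 0 := by
  obtain ⟨hre, him⟩ := Complex.lt_def.mp hA.det_pos
  simp only [Complex.zero_re, Complex.zero_im] at hre him
  have hdet : HasDerivAt (fun s : ℝ => (A + (s : ℂ) • B).det.re)
      (A.det * (A⁻¹ * B).trace).re 0 := by
    simpa using (hasDerivAt_det_add_smul ((isUnit_iff_isUnit_det A).mp hA.isUnit) B).real_of_complex
  convert (hdet.log (by simpa using hre.ne')) using 1
  · simp [← Complex.coe_smul]
  · simp only [Complex.mul_re, ← him, zero_mul, sub_zero, Complex.ofReal_zero, zero_smul, add_zero]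
    field_simp [hre.ne']

theorem Matrix.PosSemidef.trace_mul_nonneg {𝕜 ι : Type*} [RCLike 𝕜] [Fintype ι]
    {A B : Matrix ι ι 𝕜} (hA : A.PosSemidef) (hB : B.PosSemidef) : 0 ≤ (A * B).trace := by
  classical
  obtain ⟨C, rfl⟩ : ∃ C : Matrix ι ι 𝕜, B = Cᴴ * C := by
    open scoped MatrixOrder in
    exact CStarAlgebra.nonneg_iff_eq_star_mul_self.mp hB.nonneg
  rw [← Matrix.mul_assoc, trace_mul_comm, ← Matrix.mul_assoc]
  exact (hA.mul_mul_conjTranspose_same C).trace_nonneg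

theorem Matrix.trace_mul_mul_conjTranspose {R m n : Type*} [CommSemiring R] [StarRing R] [Fintype m]
    [Fintype n] (S : Matrix m m R) (U : Matrix m n R) (Y : Matrix n n R) :
    (S * (U * Y * Uᴴ)).trace = (Uᴴ * S * U * Y).trace := by
  rw [Matrix.mul_assoc (Uᴴ * S), trace_mul_comm (Uᴴ * S), trace_mul_comm S]
  simp only [Matrix.mul_assoc]

theorem Matrix.re_trace_sum_smul_mul {ι K : Type*} [Fintype ι] [Fintype K] (c : K → ℝ)
    (A : K → Matrix ι ι ℂ) (D : Matrix ι ι ℂ) :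
    ((∑ k, c k • A k) * D).trace.re = ∑ k, c k * (A k * D).trace.re := by
  simp [Matrix.sum_mul, trace_sum, Complex.re_sum, Matrix.smul_mul, trace_smul]

theorem Matrix.trace_conjTranspose_mul_self_mul {R m n : Type*} [CommSemiring R] [StarRing R]
    [Fintype m] [Fintype n] (U : Matrix m n R) (X : Matrix n n R) :
    (Uᴴ * U * X).trace = (U * X * Uᴴ).trace := by
  rw [Matrix.mul_assoc, trace_mul_comm]

namespace SRM

section LineDerivatives

variable {m n : ℕ} {Q W : Matrix (Fin n) (Fin n) ℂ} (DQ DW : Matrix (Fin n) (Fin n) ℂ)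

theorem hasDerivAt_C0_line (H : Matrix (Fin m) (Fin n) ℂ) (hQ : Q.PosSemidef) :
    HasDerivAt (fun s : ℝ => C0 H (Q + s • DQ)) (D0mat H Q * DQ).trace.re 0 := by
  have hA : (1 + H * Q * Hᴴ).PosDef := PosDef.one.add_posSemidef (hQ.mul_mul_conjTranspose_same H)
  convert hA.hasDerivAt_log_det_re_add_smul (H * DQ * Hᴴ) using 2
  · simp only [C0, Matrix.mul_add, Matrix.add_mul, Matrix.mul_smul, Matrix.smul_mul, add_assoc]
  · rw [D0mat, trace_mul_mul_conjTranspose]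

theorem hasDerivAt_phiHat_line (P : Matrix (Fin m) (Fin n) ℂ) (hW : W.PosSemidef) :
    HasDerivAt (fun s : ℝ => phiHat P (W + s • DW)) (Dmat P W * DW).trace.re 0 := by
  have hA : (1 + P * W * Pᴴ).PosDef := PosDef.one.add_posSemidef (hW.mul_mul_conjTranspose_same P)
  convert hA.hasDerivAt_log_det_re_add_smul (P * DW * Pᴴ) using 2
  · simp only [phiHat, Matrix.mul_add, Matrix.add_mul, Matrix.mul_smul, Matrix.smul_mul, add_assoc]
  · rw [Dmat, trace_mul_mul_conjTranspose]

theorem hasDerivAt_phik_line (H P : Matrix (Fin m) (Fin n) ℂ) (hQ : Q.PosSemidef)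
    (hW : W.PosSemidef) :
    HasDerivAt (fun s : ℝ => phik H P (Q + s • DQ) (W + s • DW))
      ((Tmat H P Q W * DQ).trace.re + (Rmat H P Q W * DW).trace.re) 0 := by
  have hA : (1 + H * Q * Hᴴ + P * W * Pᴴ).PosDef :=
    (PosDef.one.add_posSemidef (hQ.mul_mul_conjTranspose_same H)).add_posSemidef
      (hW.mul_mul_conjTranspose_same P)
  convert hA.hasDerivAt_log_det_re_add_smul (H * DQ * Hᴴ + P * DW * Pᴴ) using 2
  · simp only [phik, Matrix.mul_add, Matrix.add_mul, Matrix.mul_smul, Matrix.smul_mul, smul_add]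
    abel_nf
  · rw [Matrix.mul_add, trace_add, Complex.add_re, trace_mul_mul_conjTranspose,
      trace_mul_mul_conjTranspose, Tmat, Rmat]

theorem hasDerivAt_C0_sub_Ceav_line {m0 : ℕ} (H0 : Matrix (Fin m0) (Fin n) ℂ)
    (H P : Matrix (Fin m) (Fin n) ℂ) (hQ : Q.PosSemidef)
    (hW : W.PosSemidef) :
    HasDerivAt (fun s : ℝ => C0 H0 (Q + s • DQ) - Ceav H P (Q + s • DQ) (W + s • DW))
      (((D0mat H0 Q - Tmat H P Q W) * DQ).trace.re
        - ((Rmat H P Q W - Dmat P W) * DW).trace.re) 0 := by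
  refine ((hasDerivAt_C0_line DQ H0 hQ).fun_sub ((hasDerivAt_phik_line DQ DW H P hQ hW).fun_sub
    (hasDerivAt_phiHat_line DW P hW))).congr_deriv ?_
  rw [Matrix.sub_mul, Matrix.sub_mul, trace_sub, trace_sub, Complex.sub_re, Complex.sub_re]
  ring

end LineDerivatives

theorem sum_mul_lineDeriv_eq_of_stationarity {n mg m0 : ℕ} {K : Type*} [Fintype K] {mk : K → ℕ}
    {H0 : Matrix (Fin m0) (Fin n) ℂ} {G : Matrix (Fin mg) (Fin n) ℂ} {V : Matrix (Fin n) (Fin n) ℂ}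
    {Hm Pm : (k : K) → Matrix (Fin (mk k)) (Fin n) ℂ} {Q W M N : Matrix (Fin n) (Fin n) ℂ}
    {μ1 μ2 : ℝ} {lam : K → ℝ}
    (kkt1 : -(D0mat H0 Q) + μ1 • (Gᴴ * G) + μ2 • (1 : Matrix (Fin n) (Fin n) ℂ) - M
      + ∑ k : K, lam k • Tmat (Hm k) (Pm k) Q W = 0)
    (kkt2 : μ1 • (Vᴴ * Gᴴ * G * V) + μ2 • (1 : Matrix (Fin n) (Fin n) ℂ) - N
      + ∑ k : K, lam k • (Rmat (Hm k) (Pm k) Q W - Dmat (Pm k) W) = 0)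
    (kkt3 : ∑ k : K, lam k = 1) (DQ DW : Matrix (Fin n) (Fin n) ℂ) :
    ∑ k, lam k * (((D0mat H0 Q - Tmat (Hm k) (Pm k) Q W) * DQ).trace.re
        - ((Rmat (Hm k) (Pm k) Q W - Dmat (Pm k) W) * DW).trace.re)
      = ((μ1 • (Gᴴ * G) + μ2 • 1 - M) * DQ).trace.re
        + ((μ1 • (Vᴴ * Gᴴ * G * V) + μ2 • 1 - N) * DW).trace.re := by
  have hQ : ∑ k, lam k • (D0mat H0 Q - Tmat (Hm k) (Pm k) Q W) = μ1 • (Gᴴ * G) + μ2 • 1 - M := by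
    simp only [smul_sub, sum_sub_distrib, ← sum_smul, kkt3, one_smul]
    linear_combination (norm := module) -kkt1
  have hW : ∑ k, lam k • (Rmat (Hm k) (Pm k) Q W - Dmat (Pm k) W)
      = -(μ1 • (Vᴴ * Gᴴ * G * V) + μ2 • 1 - N) := by
    linear_combination (norm := module) kkt2
  simp only [mul_sub, sum_sub_distrib, ← re_trace_sum_smul_mul, hQ, hW, Matrix.neg_mul, trace_neg,
    Complex.neg_re, sub_neg_eq_add]

theorem re_trace_lagrangian_mul_sub_nonpos {n mg : ℕ}
    {G : Matrix (Fin mg) (Fin n) ℂ} {V : Matrix (Fin n) (Fin n) ℂ} {Pmax Γ : ℝ}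
    {Q W M N : Matrix (Fin n) (Fin n) ℂ} {μ1 μ2 : ℝ}
    (hM : M.PosSemidef) (hN : N.PosSemidef) (hμ1 : 0 ≤ μ1) (hμ2 : 0 ≤ μ2)
    (kkt4a : μ1 * (((G * Q * Gᴴ + G * V * W * Vᴴ * Gᴴ).trace).re - Γ) = 0)
    (kkt4b : μ2 * (((Q + W).trace).re - Pmax) = 0)
    (kkt4c : M * Q = 0) (kkt4d : N * W = 0)
    {Z : Matrix (Fin n) (Fin n) ℂ × Matrix (Fin n) (Fin n) ℂ} (hZ : Z ∈ SZ G V Pmax Γ) :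
    ((μ1 • (Gᴴ * G) + μ2 • 1 - M) * (Z.1 - Q)).trace.re
      + ((μ1 • (Vᴴ * Gᴴ * G * V) + μ2 • 1 - N) * (Z.2 - W)).trace.re ≤ 0 := by
  obtain ⟨hZ1, hZ2, hZΓ, hZP⟩ := hZ
  have hMZ : 0 ≤ (M * (Z.1 - Q)).trace.re := by
    rw [Matrix.mul_sub, kkt4c, sub_zero]
    exact (Complex.le_def.mp (hM.trace_mul_nonneg hZ1)).1
  have hNZ : 0 ≤ (N * (Z.2 - W)).trace.re := by
    rw [Matrix.mul_sub, kkt4d, sub_zero]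
    exact (Complex.le_def.mp (hN.trace_mul_nonneg hZ2)).1
  have hGV : Vᴴ * Gᴴ * G * V = (G * V)ᴴ * (G * V) := by
    simp only [conjTranspose_mul, Matrix.mul_assoc]
  have hΓ : (Gᴴ * G * (Z.1 - Q)).trace.re + (Vᴴ * Gᴴ * G * V * (Z.2 - W)).trace.re
      = (G * Z.1 * Gᴴ + G * V * Z.2 * Vᴴ * Gᴴ).trace.re
        - (G * Q * Gᴴ + G * V * W * Vᴴ * Gᴴ).trace.re := by
    rw [hGV, trace_conjTranspose_mul_self_mul, trace_conjTranspose_mul_self_mul]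
    simp only [conjTranspose_mul, Matrix.mul_sub, Matrix.sub_mul, Matrix.mul_assoc, trace_sub,
      trace_add, Complex.sub_re, Complex.add_re]
    ring
  have hP : (Z.1 - Q).trace.re + (Z.2 - W).trace.re = (Z.1 + Z.2).trace.re - (Q + W).trace.re := by
    simp only [trace_sub, trace_add, Complex.sub_re, Complex.add_re]
    ring
  have hexpand : ((μ1 • (Gᴴ * G) + μ2 • 1 - M) * (Z.1 - Q)).trace.re
      + ((μ1 • (Vᴴ * Gᴴ * G * V) + μ2 • 1 - N) * (Z.2 - W)).trace.re
      = μ1 * ((Gᴴ * G * (Z.1 - Q)).trace.re + (Vᴴ * Gᴴ * G * V * (Z.2 - W)).trace.re)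
        + μ2 * ((Z.1 - Q).trace.re + (Z.2 - W).trace.re)
        - (M * (Z.1 - Q)).trace.re - (N * (Z.2 - W)).trace.re := by
    simp only [Matrix.add_mul, Matrix.sub_mul, Matrix.smul_mul, Matrix.one_mul, trace_add,
      trace_sub, trace_smul, Complex.add_re, Complex.sub_re, Complex.real_smul,
      Complex.re_ofReal_mul]
    ring
  rw [hexpand, hΓ, hP]
  nlinarith [mul_nonneg hμ1 (sub_nonneg.mpr hZΓ), mul_nonneg hμ2 (sub_nonneg.mpr hZP)]

theorem Cs_le_sum_mul {m0 n : ℕ} {K : Type*} [Fintype K] [Nonempty K] {mk : K → ℕ}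
    (H0 : Matrix (Fin m0) (Fin n) ℂ) (Hm Pm : (k : K) → Matrix (Fin (mk k)) (Fin n) ℂ)
    (Q W : Matrix (Fin n) (Fin n) ℂ) {lam : K → ℝ} (hlam : ∀ k, 0 ≤ lam k)
    (hsum : ∑ k, lam k = 1) :
    Cs H0 Hm Pm Q W ≤ ∑ k, lam k * (C0 H0 Q - Ceav (Hm k) (Pm k) Q W) := by
  have hmax := centerMass_le_sup (s := univ) (f := fun k => Ceav (Hm k) (Pm k) Q W)
    (fun k _ => hlam k) (by rw [hsum]; exact one_pos)
  rw [centerMass_eq_of_sum_1 _ _ hsum] at hmax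
  simp only [smul_eq_mul] at hmax
  simp only [Cs, mul_sub, sum_sub_distrib, ← sum_mul, hsum, one_mul]
  linarith

theorem sum_mul_C0_sub_Ceav_eq {m0 n : ℕ} {K : Type*} [Fintype K] {mk : K → ℕ}
    (H0 : Matrix (Fin m0) (Fin n) ℂ) (Hm Pm : (k : K) → Matrix (Fin (mk k)) (Fin n) ℂ)
    (Q W : Matrix (Fin n) (Fin n) ℂ) {lam : K → ℝ} {t : ℝ} (hsum : ∑ k, lam k = 1)
    (hslack : ∀ k, lam k * (Ceav (Hm k) (Pm k) Q W - t) = 0) :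
    ∑ k, lam k * (C0 H0 Q - Ceav (Hm k) (Pm k) Q W) = C0 H0 Q - t := by
  have h : ∀ k, lam k * (C0 H0 Q - Ceav (Hm k) (Pm k) Q W) = lam k * (C0 H0 Q - t) :=
    fun k => by linear_combination -hslack k
  simp only [h, ← sum_mul, hsum, one_mul]

theorem C0_sub_le_Cs {m0 n : ℕ} {K : Type*} [Fintype K] [Nonempty K] {mk : K → ℕ}
    (H0 : Matrix (Fin m0) (Fin n) ℂ) (Hm Pm : (k : K) → Matrix (Fin (mk k)) (Fin n) ℂ)
    {Q W : Matrix (Fin n) (Fin n) ℂ} {t : ℝ} (ht : ∀ k, Ceav (Hm k) (Pm k) Q W ≤ t) :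
    C0 H0 Q - t ≤ Cs H0 Hm Pm Q W :=
  sub_le_sub_left (sup'_le _ _ fun k _ => ht k) _

theorem kkt_global_opt_general {n mg m0 : ℕ} {K : Type*} [Fintype K] [Nonempty K] {mk : K → ℕ}
    (H0 : Matrix (Fin m0) (Fin n) ℂ)
    (G : Matrix (Fin mg) (Fin n) ℂ) (V : Matrix (Fin n) (Fin n) ℂ)
    (Pmax Γ : ℝ)
    (Hm Pm : (k : K) → Matrix (Fin (mk k)) (Fin n) ℂ)
    (Q W M N : Matrix (Fin n) (Fin n) ℂ) (t : ℝ)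
    (hQ : Q.PosSemidef) (hW : W.PosSemidef) (hM : M.PosSemidef) (hN : N.PosSemidef)
    (μ1 μ2 : ℝ) (hμ1 : 0 ≤ μ1) (hμ2 : 0 ≤ μ2)
    (lam : K → ℝ) (hlam : ∀ k : K, 0 ≤ lam k)
    (kkt1 : -(D0mat H0 Q) + μ1 • (Gᴴ * G) + μ2 • (1 : Matrix (Fin n) (Fin n) ℂ) - M
      + ∑ k : K, lam k • Tmat (Hm k) (Pm k) Q W = 0)
    (kkt2 : μ1 • (Vᴴ * Gᴴ * G * V) + μ2 • (1 : Matrix (Fin n) (Fin n) ℂ) - N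
      + ∑ k : K, lam k • (Rmat (Hm k) (Pm k) Q W - Dmat (Pm k) W) = 0)
    (kkt3 : ∑ k : K, lam k = 1)
    (kkt4a : μ1 * (((G * Q * Gᴴ + G * V * W * Vᴴ * Gᴴ).trace).re - Γ) = 0)
    (kkt4b : μ2 * (((Q + W).trace).re - Pmax) = 0)
    (kkt4c : M * Q = 0) (kkt4d : N * W = 0)
    (kkt4e : ∀ k : K, lam k * (Ceav (Hm k) (Pm k) Q W - t) = 0)
    (kkt5b : ∀ k : K, Ceav (Hm k) (Pm k) Q W ≤ t)
    -- concavity of C0 - Ck on the set of PSD Hermitian pairs: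
    (hconc : ∀ k : K, ConcaveOn ℝ
      {Z : Matrix (Fin n) (Fin n) ℂ × Matrix (Fin n) (Fin n) ℂ |
        Z.1.PosSemidef ∧ Z.2.PosSemidef}
      (fun Z => C0 H0 Z.1 - Ceav (Hm k) (Pm k) Z.1 Z.2)) :
    ∀ Z ∈ SZ G V Pmax Γ, Cs H0 Hm Pm Z.1 Z.2 ≤ Cs H0 Hm Pm Q W := by
  intro Z hZ
  have htangent : ∀ k, (C0 H0 Z.1 - Ceav (Hm k) (Pm k) Z.1 Z.2)
        - (C0 H0 Q - Ceav (Hm k) (Pm k) Q W)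
      ≤ ((D0mat H0 Q - Tmat (Hm k) (Pm k) Q W) * (Z.1 - Q)).trace.re
        - ((Rmat (Hm k) (Pm k) Q W - Dmat (Pm k) W) * (Z.2 - W)).trace.re := fun k =>
    (hconc k).sub_le_of_hasDerivAt_line (x := (Q, W)) ⟨hQ, hW⟩ ⟨hZ.1, hZ.2.1⟩
      (hasDerivAt_C0_sub_Ceav_line _ _ H0 (Hm k) (Pm k) hQ hW)
  have hderiv : ∑ k, lam k * (((D0mat H0 Q - Tmat (Hm k) (Pm k) Q W) * (Z.1 - Q)).trace.re
      - ((Rmat (Hm k) (Pm k) Q W - Dmat (Pm k) W) * (Z.2 - W)).trace.re) ≤ 0 := by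
    rw [sum_mul_lineDeriv_eq_of_stationarity kkt1 kkt2 kkt3]
    exact re_trace_lagrangian_mul_sub_nonpos hM hN hμ1 hμ2 kkt4a kkt4b kkt4c kkt4d hZ
  have hweighted := sum_le_sum fun k (_ : k ∈ univ) =>
    mul_le_mul_of_nonneg_left (htangent k) (hlam k)
  calc Cs H0 Hm Pm Z.1 Z.2
      ≤ ∑ k, lam k * (C0 H0 Z.1 - Ceav (Hm k) (Pm k) Z.1 Z.2) := Cs_le_sum_mul _ _ _ _ _ hlam kkt3
    _ ≤ ∑ k, lam k * (C0 H0 Q - Ceav (Hm k) (Pm k) Q W) := by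
      simp only [mul_sub, sum_sub_distrib] at hweighted hderiv ⊢
      linarith
    _ = C0 H0 Q - t := sum_mul_C0_sub_Ceav_eq _ _ _ _ _ kkt3 kkt4e
    _ ≤ Cs H0 Hm Pm Q W := C0_sub_le_Cs _ _ _ kkt5b

/-- Proposition 4: if `(Q,W,t)` satisfies the KKT system of (P3a) at
the convergence point, and if for every `k` the function `C_0 - C_k` is concave on
the set of PSD Hermitian pairs, then `(Q,W)` is a global maximizer of the secrecy
rate over `S_Z`. -/
theorem kkt_global_opt {n mg m0 : ℕ} {K : Type*} [Fintype K] [Nonempty K] {mk : K → ℕ} (hn : 0 < n)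
    (H0 : Matrix (Fin m0) (Fin n) ℂ)
    (G : Matrix (Fin mg) (Fin n) ℂ) (V : Matrix (Fin n) (Fin n) ℂ)
    (Pmax Γ : ℝ) (hPmax : 0 ≤ Pmax) (hΓ : 0 ≤ Γ)
    (Hm Pm : (k : K) → Matrix (Fin (mk k)) (Fin n) ℂ)
    (Q W M N : Matrix (Fin n) (Fin n) ℂ) (t : ℝ)
    (hQ : Q.PosSemidef) (hW : W.PosSemidef) (hM : M.PosSemidef) (hN : N.PosSemidef)
    (μ1 μ2 : ℝ) (hμ1 : 0 ≤ μ1) (hμ2 : 0 ≤ μ2)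
    (lam : K → ℝ) (hlam : ∀ k : K, 0 ≤ lam k)
    (kkt1 : -(D0mat H0 Q) + μ1 • (Gᴴ * G) + μ2 • (1 : Matrix (Fin n) (Fin n) ℂ) - M
      + ∑ k : K, lam k • Tmat (Hm k) (Pm k) Q W = 0)
    (kkt2 : μ1 • (Vᴴ * Gᴴ * G * V) + μ2 • (1 : Matrix (Fin n) (Fin n) ℂ) - N
      + ∑ k : K, lam k • (Rmat (Hm k) (Pm k) Q W - Dmat (Pm k) W) = 0)
    (kkt3 : ∑ k : K, lam k = 1)
    (kkt4a : μ1 * (((G * Q * Gᴴ + G * V * W * Vᴴ * Gᴴ).trace).re - Γ) = 0)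
    (kkt4b : μ2 * (((Q + W).trace).re - Pmax) = 0)
    (kkt4c : M * Q = 0) (kkt4d : N * W = 0)
    (kkt4e : ∀ k : K, lam k * (Ceav (Hm k) (Pm k) Q W - t) = 0)
    (kkt5a : (Q, W) ∈ SZ G V Pmax Γ)
    (kkt5b : ∀ k : K, Ceav (Hm k) (Pm k) Q W ≤ t)
    -- concavity of C0 - Ck on the set of PSD Hermitian pairs:
    (hconc : ∀ k : K, ConcaveOn ℝ
      {Z : Matrix (Fin n) (Fin n) ℂ × Matrix (Fin n) (Fin n) ℂ |
        Z.1.PosSemidef ∧ Z.2.PosSemidef}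
      (fun Z => C0 H0 Z.1 - Ceav (Hm k) (Pm k) Z.1 Z.2)) :
    ∀ Z ∈ SZ G V Pmax Γ, Cs H0 Hm Pm Z.1 Z.2 ≤ Cs H0 Hm Pm Q W :=
  kkt_global_opt_general H0 G V Pmax Γ Hm Pm Q W M N t hQ hW hM hN μ1 μ2 hμ1 hμ2 lam hlam kkt1 kkt2
    kkt3 kkt4a kkt4b kkt4c kkt4d kkt4e kkt5b hconc

end SRM
end
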